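/- arXiv:2402.12293 — 2 statements merged into one kernel-verified Lean document; each statement's English description precedes it below -/
import Mathlib

section
/- Let R = k[x,y], D = R^2 with differential ∂_D given by the matrix [[xy, -x^2],[y^2, -xy]] (a degree 2 differential module). Then the homology H(D, ∂_D) = ker(∂_D)/im(∂_D) is nonzero; in fact the cycle (x, y) generates a nonzero class in homology. -/
open MvPolynomial

/-- Over `R = k[x,y]`, let `(D, ∂_D)` be the degree 2 differential module with
`D = R²` and `∂_D = [[xy, -x²],[y², -xy]]`.  The vector `(x, y)` is a nonzero cycle which is not
a boundary; hence its class in the homology `H(D,∂_D) = ker ∂_D / im ∂_D` is nonzero, and in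
particular the homology is nonzero. -/
theorem stmt2 (k : Type) [Field k] :
    let R := MvPolynomial (Fin 2) k
    let A : Matrix (Fin 2) (Fin 2) R :=
      !![X 0 * X 1, -(X 0 ^ 2); X 1 ^ 2, -(X 0 * X 1)]
    let v : Fin 2 → R := ![X 0, X 1]
    -- `v` is a nonzero cycle
    v ≠ 0 ∧ A.mulVec v = 0 ∧
    -- `v` is not a boundary, so its homology class is nonzero and `H(D,∂_D) ≠ 0`
    (∀ w : Fin 2 → R, A.mulVec w ≠ v) := by
  intro R A v
  refine ⟨?_, ?_, ?_⟩
  · intro h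
    have h0 := congrFun h 0
    simp only [v, Matrix.cons_val_zero, Pi.zero_apply] at h0
    exact X_ne_zero (0 : Fin 2) h0
  · funext i
    fin_cases i <;>
      simp [A, v, Matrix.mulVec, dotProduct, Fin.sum_univ_two] <;> ring
  · intro w h
    have h0 := congrFun h 0
    simp [A, v, Matrix.mulVec, dotProduct, Fin.sum_univ_two] at h0
    have key : X 0 * (X 1 * w 0 - X 0 * w 1) = X (0 : Fin 2) * (1 : R) := by
      rw [mul_one]; linear_combination h0
    have h1 : X 1 * w 0 - X 0 * w 1 = (1 : R) :=
      mul_left_cancel₀ (X_ne_zero (0 : Fin 2)) key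
    have h2 := congrArg (eval (0 : Fin 2 → k)) h1
    simp at h2
end

section
/- Let R = k[x,y], and let (D, ∂_D) be the degree 2 differential module with D = R^2 and ∂_D = [[xy, -x^2],[y^2, -xy]]. Then (D, ∂_D) is not isomorphic (as a differential module) to any free flag differential module. -/
open MvPolynomial DirectSum
open scoped Matrix

/-!
Let `G = ⨁ i, G_i` be a free flag and `i` the lowest index with `G_i ≠ 0`. The flag condition
forces `∂` to vanish on `G_i`, so any basis vector `v` of `G_i` is a cycle which is part of a basis
of `G`, i.e. some linear form takes the value `1` on it. An isomorphism with `(D, ∂_D)` would carry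
`v` to a vector `w ∈ ker ∂_D`. But `∂_D w = 0` gives `y w₀ = x w₁`, so both coordinates of `w`
have constant term `0`, and then so does `φ w` for every linear form `φ` on `R²`.
-/

section FreeFlag

variable {R : Type*} [CommRing R] {β : ℕ → Type*}

theorem FreeFlag.apply_lof_eq_zero_of_isEmpty
    {d : (⨁ i, (β i →₀ R)) →ₗ[R] (⨁ i, (β i →₀ R))}
    (hflag : ∀ (i : ℕ) (x : β i →₀ R), d (lof R ℕ (fun i => β i →₀ R) i x) ∈
      ⨆ j ∈ Set.Iio i, LinearMap.range (lof R ℕ (fun i => β i →₀ R) j))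
    {i : ℕ} (hi : ∀ j < i, IsEmpty (β j)) (x : β i →₀ R) :
    d (lof R ℕ (fun i => β i →₀ R) i x) = 0 := by
  have hbot : (⨆ j ∈ Set.Iio i, LinearMap.range (lof R ℕ (fun i => β i →₀ R) j)) = ⊥ := by
    refine le_bot_iff.mp (iSup₂_le fun j hj => ?_)
    rintro _ ⟨y, rfl⟩
    have := hi j hj
    simp [Subsingleton.elim y 0]
  simpa only [hbot, Submodule.mem_bot] using hflag i x

theorem FreeFlag.exists_cycle_apply_eq_one [Nontrivial (⨁ i, (β i →₀ R))]
    {d : (⨁ i, (β i →₀ R)) →ₗ[R] (⨁ i, (β i →₀ R))}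
    (hflag : ∀ (i : ℕ) (x : β i →₀ R), d (lof R ℕ (fun i => β i →₀ R) i x) ∈
      ⨆ j ∈ Set.Iio i, LinearMap.range (lof R ℕ (fun i => β i →₀ R) j)) :
    ∃ v, d v = 0 ∧ ∃ f : (⨁ i, (β i →₀ R)) →ₗ[R] R, f v = 1 := by
  classical
  have hex : ∃ i, Nonempty (β i) := by
    by_contra! hempty
    obtain ⟨x, hx⟩ := exists_ne (0 : ⨁ i, (β i →₀ R))
    exact hx (DFinsupp.ext fun j => Finsupp.ext fun b => (hempty j).elim b)
  obtain ⟨b⟩ := Nat.find_spec hex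
  refine ⟨lof R ℕ _ (Nat.find hex) (Finsupp.single b 1),
    FreeFlag.apply_lof_eq_zero_of_isEmpty hflag
      (fun j hj => not_nonempty_iff.mp (Nat.find_min hex hj)) _,
    Finsupp.lapply b ∘ₗ component R ℕ _ (Nat.find hex), ?_⟩
  simp [component.lof_self]

end FreeFlag

theorem LinearMap.apply_mem_of_forall_mem {R ι : Type*} [CommRing R] [Fintype ι] [DecidableEq ι]
    {I : Ideal R} (f : (ι → R) →ₗ[R] R) {w : ι → R} (hw : ∀ i, w i ∈ I) : f w ∈ I := by
  rw [f.pi_apply_eq_sum_univ]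
  exact I.sum_mem fun i _ => I.mul_mem_right _ (hw i)

namespace MvPolynomial

variable {σ k : Type*}

theorem constantCoeff_eq_zero_of_X_mul_eq_X_mul [CommSemiring k] {i j : σ} (hij : i ≠ j)
    {p q : MvPolynomial σ k} (h : X i * p = X j * q) : constantCoeff p = 0 := by
  classical
  have := congrArg (coeff (Finsupp.single i 1)) h
  rw [coeff_X_mul', coeff_X_mul'] at this
  simpa [hij.symm, constantCoeff_eq] using this

theorem constantCoeff_eq_zero_of_mulVec_eq_zero [CommRing k] {w : Fin 2 → MvPolynomial (Fin 2) k}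
    (hw : !![X 0 * X 1, -(X 0 ^ 2); X 1 ^ 2, -(X 0 * X 1)] *ᵥ w = 0) (j : Fin 2) :
    constantCoeff (w j) = 0 := by
  have hrow : X 0 * (X 1 * w 0) = X 0 * (X 0 * w 1) := by
    have := congrFun hw 0
    simp only [Matrix.mulVec, dotProduct, Fin.sum_univ_two, Matrix.of_apply, Matrix.cons_val',
      Matrix.cons_val_zero, Matrix.cons_val_one, Matrix.empty_val', Matrix.cons_val_fin_one,
      Pi.zero_apply] at this
    linear_combination this
  rw [X_mul_cancel_left_iff] at hrow
  fin_cases j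
  · exact constantCoeff_eq_zero_of_X_mul_eq_X_mul (by decide) hrow
  · exact constantCoeff_eq_zero_of_X_mul_eq_X_mul (by decide) hrow.symm

end MvPolynomial

/-- Over `R = k[x,y]`, the degree 2 differential module `(D, ∂_D)` with `D = R²`
and `∂_D = [[xy, -x²],[y², -xy]]` is not isomorphic, as a differential module, to any free flag
differential module.  A free flag is a differential module of the form `G = ⊕_{i≥0} G_i` with each
`G_i` free (here `G_i = β i →₀ R`) and `∂(G_i) ⊆ ⊕_{j<i} G_j`; an isomorphism of differential
modules is a module isomorphism commuting with the differentials. -/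
theorem stmt3 (k : Type) [Field k] :
    let R := MvPolynomial (Fin 2) k
    let A : Matrix (Fin 2) (Fin 2) R :=
      !![X 0 * X 1, -(X 0 ^ 2); X 1 ^ 2, -(X 0 * X 1)]
    ¬ ∃ (β : ℕ → Type)
        (d : (⨁ i, (β i →₀ R)) →ₗ[R] (⨁ i, (β i →₀ R)))
        (e : (⨁ i, (β i →₀ R)) ≃ₗ[R] (Fin 2 → R)),
        -- `(G, d)` is a differential module:
        d.comp d = 0 ∧
        -- free flag condition: `d(G_i) ⊆ ⊕_{j<i} G_j`
        (∀ (i : ℕ) (x : β i →₀ R),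
          d (DirectSum.lof R ℕ (fun i => β i →₀ R) i x) ∈
            ⨆ j ∈ Set.Iio i, LinearMap.range (DirectSum.lof R ℕ (fun i => β i →₀ R) j)) ∧
        -- `e` is an isomorphism of differential modules `(G, d) ≅ (D, ∂_D)`
        e.toLinearMap.comp d = (Matrix.toLin' A).comp e.toLinearMap := by
  intro R A
  rintro ⟨β, d, e, -, hflag, hcomm⟩
  have : Nontrivial (⨁ i, (β i →₀ R)) := e.toEquiv.nontrivial
  obtain ⟨v, hdv, f, hfv⟩ := FreeFlag.exists_cycle_apply_eq_one hflag
  have hker : A *ᵥ e v = 0 := by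
    simpa only [LinearMap.comp_apply, LinearEquiv.coe_coe, hdv, map_zero, Matrix.toLin'_apply]
      using (LinearMap.congr_fun hcomm v).symm
  have hmem : (f ∘ₗ e.symm.toLinearMap) (e v) ∈ RingHom.ker (constantCoeff (R := k)) :=
    LinearMap.apply_mem_of_forall_mem _ (constantCoeff_eq_zero_of_mulVec_eq_zero hker)
  simp [hfv] at hmem
end
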